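/- Let α : ℕ → ℂ with |α_n| ≤ 1 for all n. Then for all H ≥ 2 and all 0 ≤ k < H, ((1/H) ∑_{h₂=0}^{H-1} |(1/H) ∑_{h₁=0}^{H-1} α_{h₁} α_{h₁+k} α_{h₁+h₂} α_{h₁+h₂+k}|²)^{1/2} ≤ C · sup_{t ∈ [0,1)} |(1/H) ∑_{h₁=0}^{2(H-1)} α_{h₁} α_{h₁+k} e^{2πih₁t}|, where C is an absolute constant. -/

import Mathlib

/-!
Write `β n = α n * α (n + k)` and `N = 2H - 1`. With `p(z) = ∑_{i<H} β_{H-1-i} z^i` (the first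
`H` terms of `β`, reversed) and `q(z) = ∑_{m<N} β_m z^m`, the correlation `∑_{i<H} β_i β_{i+h}`
is the coefficient of `z^{H-1+h}` in `p q` for every `h < H`. By Parseval on the unit circle the
sum of their squares is at most `sup_{|z|=1} |q(z)|² · ∑_{i<H} |β_i|² ≤ H sup |q|²`, and
`q(e^{2πit})` is `H` times the exponential sum in the statement, so the bound holds with `C = 1`.
-/

open Finset Polynomial Complex Metric

noncomputable def seqPoly {R : Type*} [Semiring R] (a : ℕ → R) (n : ℕ) : R[X] :=
  ∑ i ∈ range n, C (a i) * X ^ i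

section seqPoly

variable {R : Type*}

theorem coeff_seqPoly [Semiring R] (a : ℕ → R) (n i : ℕ) :
    (seqPoly a n).coeff i = if i < n then a i else 0 := by
  simp [seqPoly, finsetSum_coeff]

theorem eval_seqPoly [CommSemiring R] (a : ℕ → R) (n : ℕ) (z : R) :
    (seqPoly a n).eval z = ∑ i ∈ range n, a i * z ^ i := by
  simp [seqPoly, eval_finsetSum]

theorem sum_sq_norm_coeff_seqPoly [NormedRing R] (a : ℕ → R) (n : ℕ) :
    ∑ i ∈ (seqPoly a n).support, ‖(seqPoly a n).coeff i‖ ^ 2 = ∑ i ∈ range n, ‖a i‖ ^ 2 := by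
  have hsupp : (seqPoly a n).support ⊆ range n := fun i hi ↦ by
    by_contra h
    simp [coeff_seqPoly, mem_range.not.mp h] at hi
  rw [sum_subset hsupp fun i _ hi ↦ by simp [notMem_support_iff.mp hi]]
  exact sum_congr rfl fun i hi ↦ by rw [coeff_seqPoly, if_pos (mem_range.mp hi)]

theorem coeff_seqPoly_reflect_mul_seqPoly [CommSemiring R] (a b : ℕ → R) {H N h : ℕ}
    (hN : H + h ≤ N) :
    (seqPoly (fun i ↦ a (H - 1 - i)) H * seqPoly b N).coeff (H - 1 + h) =
      ∑ i ∈ range H, a i * b (i + h) := by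
  rw [coeff_mul, Nat.sum_antidiagonal_eq_sum_range_succ_mk,
    ← sum_range_reflect (fun i ↦ a i * b (i + h)),
    ← sum_subset (range_subset_range.mpr (by omega : H ≤ H - 1 + h + 1))]
  · refine sum_congr rfl fun i hi ↦ ?_
    rw [mem_range] at hi
    simp only [coeff_seqPoly, if_pos hi, if_pos (by omega : H - 1 + h - i < N)]
    congr 2
    omega
  · intro i _ hi
    simp [coeff_seqPoly, mem_range.not.mp hi]

end seqPoly

theorem Polynomial.sum_sq_norm_coeff_le_circleAverage (p : ℂ[X]) (s : Finset ℕ) :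
    ∑ i ∈ s, ‖p.coeff i‖ ^ 2 ≤ Real.circleAverage (fun z ↦ ‖p.eval z‖ ^ 2) 0 1 := by
  rw [← p.sum_sq_norm_coeff_eq_circleAverage]
  calc ∑ i ∈ s, ‖p.coeff i‖ ^ 2 ≤ ∑ i ∈ s ∪ p.support, ‖p.coeff i‖ ^ 2 :=
        sum_le_sum_of_subset_of_nonneg subset_union_left fun _ _ _ ↦ by positivity
    _ = ∑ i ∈ p.support, ‖p.coeff i‖ ^ 2 :=
        (sum_subset subset_union_right fun i _ hi ↦ by simp [notMem_support_iff.mp hi]).symm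

theorem Polynomial.circleAverage_norm_sq_eval_mul_le (p q : ℂ[X]) {M : ℝ}
    (hq : ∀ z ∈ sphere (0 : ℂ) 1, ‖q.eval z‖ ≤ M) :
    Real.circleAverage (fun z ↦ ‖(p * q).eval z‖ ^ 2) 0 1 ≤
      M ^ 2 * ∑ i ∈ p.support, ‖p.coeff i‖ ^ 2 := by
  rw [p.sum_sq_norm_coeff_eq_circleAverage, ← smul_eq_mul (M ^ 2), ← Real.circleAverage_fun_smul]
  refine Real.circleAverage_mono ?_ ?_ fun z hz ↦ ?_
  · exact (by fun_prop : Continuous fun z ↦ ‖(p * q).eval z‖ ^ 2).continuousOn.circleIntegrable'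
  · exact (by fun_prop : Continuous fun z ↦ M ^ 2 • ‖p.eval z‖ ^ 2).continuousOn.circleIntegrable'
  · rw [abs_one] at hz
    rw [eval_mul, norm_mul, mul_pow, mul_comm, smul_eq_mul]
    gcongr
    exact hq z hz

theorem sum_sq_norm_correlation_le (a b : ℕ → ℂ) {H N : ℕ} (hN : 2 * H ≤ N + 1) {M : ℝ}
    (hM : ∀ z ∈ sphere (0 : ℂ) 1, ‖∑ m ∈ range N, b m * z ^ m‖ ≤ M) :
    ∑ h ∈ range H, ‖∑ i ∈ range H, a i * b (i + h)‖ ^ 2 ≤ M ^ 2 * ∑ i ∈ range H, ‖a i‖ ^ 2 := by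
  set p := seqPoly (fun i ↦ a (H - 1 - i)) H
  set q := seqPoly b N
  calc ∑ h ∈ range H, ‖∑ i ∈ range H, a i * b (i + h)‖ ^ 2
      = ∑ h ∈ range H, ‖(p * q).coeff (H - 1 + h)‖ ^ 2 :=
        sum_congr rfl fun h hh ↦ by
          rw [coeff_seqPoly_reflect_mul_seqPoly a b (by simp at hh; omega)]
    _ = ∑ i ∈ (range H).map (addLeftEmbedding (H - 1)), ‖(p * q).coeff i‖ ^ 2 :=
        by rw [sum_map]; rfl
    _ ≤ Real.circleAverage (fun z ↦ ‖(p * q).eval z‖ ^ 2) 0 1 :=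
        (p * q).sum_sq_norm_coeff_le_circleAverage _
    _ ≤ M ^ 2 * ∑ i ∈ p.support, ‖p.coeff i‖ ^ 2 :=
        p.circleAverage_norm_sq_eval_mul_le q fun z hz ↦ by rw [eval_seqPoly]; exact hM z hz
    _ = M ^ 2 * ∑ i ∈ range H, ‖a i‖ ^ 2 := by
        rw [sum_sq_norm_coeff_seqPoly, sum_range_reflect (fun i ↦ ‖a i‖ ^ 2)]

theorem exists_mem_Ico_exp_eq_of_mem_sphere {z : ℂ} (hz : z ∈ sphere (0 : ℂ) 1) :
    ∃ t ∈ Set.Ico (0 : ℝ) 1, exp (2 * Real.pi * I * t) = z := by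
  rw [← range_exp_mul_I] at hz
  obtain ⟨θ, rfl⟩ := hz
  refine ⟨Int.fract (θ / (2 * Real.pi)), ⟨Int.fract_nonneg _, Int.fract_lt_one _⟩, ?_⟩
  rw [Int.fract, Complex.ofReal_sub, mul_sub, Complex.ofReal_intCast]
  convert exp_periodic.sub_int_mul_eq (x := θ * I) ⌊θ / (2 * Real.pi)⌋ using 2
  push_cast
  field_simp

theorem norm_sum_mul_exp_le (c : ℕ → ℂ) (s : Finset ℕ) (t : ℝ) :
    ‖∑ n ∈ s, c n * exp (2 * Real.pi * I * n * t)‖ ≤ ∑ n ∈ s, ‖c n‖ := by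
  refine (norm_sum_le _ _).trans (sum_le_sum fun n _ ↦ ?_)
  rw [norm_mul, show 2 * Real.pi * I * n * t = ((2 * Real.pi * n * t : ℝ) : ℂ) * I by
    push_cast; ring, norm_exp_ofReal_mul_I, mul_one]

theorem norm_sum_mul_pow_le_iSup_exp (c : ℕ → ℂ) (s : Finset ℕ) {z : ℂ}
    (hz : z ∈ sphere (0 : ℂ) 1) :
    ‖∑ n ∈ s, c n * z ^ n‖ ≤
      ⨆ t ∈ Set.Ico (0 : ℝ) 1, ‖∑ n ∈ s, c n * exp (2 * Real.pi * I * n * t)‖ := by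
  obtain ⟨t, ht, rfl⟩ := exists_mem_Ico_exp_eq_of_mem_sphere hz
  have hbdd : BddAbove (⋃ t, Set.range fun _ : t ∈ Set.Ico (0 : ℝ) 1 ↦
      ‖∑ n ∈ s, c n * exp (2 * Real.pi * I * n * t)‖) := by
    refine ⟨∑ n ∈ s, ‖c n‖, ?_⟩
    rintro _ ⟨_, ⟨t, rfl⟩, ⟨_, rfl⟩⟩
    exact norm_sum_mul_exp_le c s t
  refine le_of_eq_of_le (congrArg norm (sum_congr rfl fun n _ ↦ ?_)) (le_ciSup₂ hbdd t ht)
  rw [← exp_nat_mul]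
  ring_nf

/-- There is an absolute constant `C` such that for any sequence `α` bounded by `1`,
`H ≥ 2` and `0 ≤ k < H`, the square root of the averaged correlation sums is bounded by
`C` times the frequency-uniform exponential sum
`sup_{t ∈ [0,1)} |(1/H) ∑_{h₁=0}^{2(H-1)} α_{h₁} α_{h₁+k} e^{2πih₁t}|`. -/
theorem correlation_bounded_by_uniform_exponential_sum :
    ∃ C : ℝ, 0 < C ∧ ∀ (α : ℕ → ℂ), (∀ n, ‖α n‖ ≤ 1) → ∀ (H k : ℕ), 2 ≤ H → k < H →
      Real.sqrt ((H : ℝ)⁻¹ * ∑ h₂ ∈ Finset.range H,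
          ‖(H : ℂ)⁻¹ * ∑ h₁ ∈ Finset.range H,
              α h₁ * α (h₁ + k) * α (h₁ + h₂) * α (h₁ + h₂ + k)‖ ^ 2)
        ≤ C * ⨆ t ∈ Set.Ico (0 : ℝ) 1,
            ‖(H : ℂ)⁻¹ * ∑ h₁ ∈ Finset.range (2 * (H - 1) + 1),
                α h₁ * α (h₁ + k) * Complex.exp (2 * Real.pi * Complex.I * h₁ * t)‖ := by
  refine ⟨1, one_pos, fun α hα H k hH _ ↦ ?_⟩
  set β : ℕ → ℂ := fun n ↦ α n * α (n + k)
  set R := ⨆ t ∈ Set.Ico (0 : ℝ) 1,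
    ‖∑ n ∈ range (2 * (H - 1) + 1), β n * exp (2 * Real.pi * I * n * t)‖
  have hβ : ∑ i ∈ range H, ‖β i‖ ^ 2 ≤ H := by
    refine (sum_le_card_nsmul _ _ 1 fun i _ ↦ ?_).trans (by simp)
    rw [norm_mul, mul_pow]
    exact mul_le_one₀ (pow_le_one₀ (norm_nonneg _) (hα _)) (by positivity)
      (pow_le_one₀ (norm_nonneg _) (hα _))
  have hcorr := sum_sq_norm_correlation_le β β (H := H) (N := 2 * (H - 1) + 1) (by omega)
    fun z hz ↦ norm_sum_mul_pow_le_iSup_exp β _ hz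
  have hR : 0 ≤ R := Real.iSup_nonneg fun t ↦ Real.iSup_nonneg fun _ ↦ norm_nonneg _
  have hH₀ : (0 : ℝ) < H := by positivity
  simp only [norm_mul, norm_inv, Complex.norm_natCast, one_mul,
    ← Real.mul_iSup_of_nonneg (inv_nonneg.2 hH₀.le)]
  rw [Real.sqrt_le_left (by positivity)]
  calc (H : ℝ)⁻¹ * ∑ h ∈ range H, ((H : ℝ)⁻¹ * ‖∑ i ∈ range H,
          α i * α (i + k) * α (i + h) * α (i + h + k)‖) ^ 2
      = (H : ℝ)⁻¹ ^ 3 * ∑ h ∈ range H, ‖∑ i ∈ range H, β i * β (i + h)‖ ^ 2 := by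
        simp only [mul_pow, ← mul_sum, β, mul_assoc]
        ring
    _ ≤ (H : ℝ)⁻¹ ^ 3 * (R ^ 2 * H) := by gcongr; exact hcorr.trans (by gcongr)
    _ = ((H : ℝ)⁻¹ * R) ^ 2 := by field_simp
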